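/- (Linear convergence of randomized coordinate descent.) Let π lie in the interior of the probability simplex and let U_π < 1 be a constant with r(π, w) ≤ U_π for all nonzero w. Let (i_t)_{t≥1} be an i.i.d. sequence of coordinate indices with distribution π, and define the random iterates w^(0) ∈ ℝⁿ and w^(t) = T_{i_t} w^(t−1). Then for every t, the expectation satisfies E[f(w^(t))] ≤ U_π^t · f(w^(0)); in particular E[f(w^(t))] converges to zero at least at the linear rate U_π. -/

import Mathlib

/-!
Unrolling the first coordinate choice, the expected value of `f` after `t + 1` steps from `w` is
the `π`-average of the expected values after `t` steps from the points `T_i w`. So a one-step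
contraction `Σ_i π_i f(T_i w) ≤ U f(w)`, which is `r(π, w) ≤ U` multiplied out by `f(w) > 0`,
iterates to `U^t f(w)` by induction on `t`; iterating needs `U ≥ 0`, which holds since `r ≥ 0`.
-/

open Matrix

/-- The coordinate descent transition map `T_i w = w - (Q_iᵀ w / Q_ii) • e_i`. -/
noncomputable def cdT {n : ℕ} (Q : Matrix (Fin n) (Fin n) ℝ) (i : Fin n)
    (w : Fin n → ℝ) : Fin n → ℝ :=
  w - ((fun j => Q j i) ⬝ᵥ w / Q i i) • (Pi.single i 1 : Fin n → ℝ)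

/-- The quadratic objective `f(w) = (1/2) wᵀ Q w`. -/
noncomputable def cdF {n : ℕ} (Q : Matrix (Fin n) (Fin n) ℝ) (w : Fin n → ℝ) : ℝ :=
  (1/2) * (w ⬝ᵥ Q.mulVec w)

/-- The expected one-step progress rate `r(π, w) = Σ_i π_i f(T_i w) / f(w)`. -/
noncomputable def cdR {n : ℕ} (Q : Matrix (Fin n) (Fin n) ℝ)
    (pi : Fin n → ℝ) (w : Fin n → ℝ) : ℝ :=
  ∑ i, pi i * cdF Q (cdT Q i w) / cdF Q w

open Finset

section RandomIteration

variable {α ι : Type*} [Fintype ι] (T : ι → α → α) (p : ι → ℝ) (f : α → ℝ)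

/-- The expectation of `f` after applying `t` maps `T i`, with indices drawn independently
from the weights `p`. -/
noncomputable def iterExpectation (t : ℕ) (x : α) : ℝ :=
  ∑ s : Fin t → ι, (∏ k, p (s k)) * f ((List.ofFn s).foldl (fun v i => T i v) x)

@[simp]
theorem iterExpectation_zero (x : α) : iterExpectation T p f 0 x = f x := by
  simp [iterExpectation]

theorem iterExpectation_succ (t : ℕ) (x : α) :
    iterExpectation T p f (t + 1) x = ∑ i, p i * iterExpectation T p f t (T i x) := by
  simp only [iterExpectation, mul_sum, ← sum_product']
  refine Fintype.sum_equiv (Fin.consEquiv fun _ => ι).symm _ _ fun s => ?_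
  rw [Fin.consEquiv_symm_apply, Fin.prod_univ_succ, List.ofFn_succ, List.foldl_cons, mul_assoc]
  rfl

variable {T p f}

theorem iterExpectation_le_pow_mul (hp : ∀ i, 0 ≤ p i) {U : ℝ} (hU : 0 ≤ U)
    (hstep : ∀ x, ∑ i, p i * f (T i x) ≤ U * f x) (t : ℕ) (x : α) :
    iterExpectation T p f t x ≤ U ^ t * f x := by
  induction t generalizing x with
  | zero => simp
  | succ t ih =>
    calc iterExpectation T p f (t + 1) x
        = ∑ i, p i * iterExpectation T p f t (T i x) := iterExpectation_succ T p f t x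
      _ ≤ ∑ i, p i * (U ^ t * f (T i x)) :=
        sum_le_sum fun i _ => mul_le_mul_of_nonneg_left (ih _) (hp i)
      _ = U ^ t * ∑ i, p i * f (T i x) := by
        rw [mul_sum]
        exact sum_congr rfl fun i _ => mul_left_comm _ _ _
      _ ≤ U ^ t * (U * f x) := mul_le_mul_of_nonneg_left (hstep x) (pow_nonneg hU t)
      _ = U ^ (t + 1) * f x := by ring

end RandomIteration

section CoordinateDescent

variable {n : ℕ} {Q : Matrix (Fin n) (Fin n) ℝ}

theorem cdF_nonneg (hQ : Q.PosSemidef) (w : Fin n → ℝ) : 0 ≤ cdF Q w :=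
  mul_nonneg (by norm_num) (hQ.dotProduct_mulVec_nonneg w)

theorem cdF_pos (hQ : Q.PosDef) {w : Fin n → ℝ} (hw : w ≠ 0) : 0 < cdF Q w :=
  mul_pos (by norm_num) (hQ.dotProduct_mulVec_pos hw)

@[simp]
theorem cdT_zero (i : Fin n) : cdT Q i 0 = 0 := by
  simp [cdT]

theorem cdR_nonneg (hQ : Q.PosSemidef) {pi : Fin n → ℝ} (hpi : ∀ i, 0 ≤ pi i)
    (w : Fin n → ℝ) : 0 ≤ cdR Q pi w :=
  sum_nonneg fun i _ =>
    div_nonneg (mul_nonneg (hpi i) (cdF_nonneg hQ _)) (cdF_nonneg hQ w)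

theorem sum_mul_cdF_cdT_le (hQ : Q.PosDef) {pi : Fin n → ℝ} {U : ℝ}
    (hUr : ∀ w : Fin n → ℝ, w ≠ 0 → cdR Q pi w ≤ U) (w : Fin n → ℝ) :
    ∑ i, pi i * cdF Q (cdT Q i w) ≤ U * cdF Q w := by
  rcases eq_or_ne w 0 with rfl | hw
  · simp [cdF]
  · have hr := hUr w hw
    rwa [cdR, ← sum_div, div_le_iff₀ (cdF_pos hQ hw)] at hr

end CoordinateDescent

theorem cd_linear_convergence_general {n : ℕ} (hn : 1 ≤ n)
    (Q : Matrix (Fin n) (Fin n) ℝ) (hQ : Q.PosDef)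
    (pi : Fin n → ℝ) (hpi : ∀ i, 0 < pi i)
    (U : ℝ) (hUr : ∀ w : Fin n → ℝ, w ≠ 0 → cdR Q pi w ≤ U)
    (w0 : Fin n → ℝ) (t : ℕ) :
    ∑ s : Fin t → Fin n, (∏ k, pi (s k)) *
        cdF Q ((List.ofFn s).foldl (fun v i => cdT Q i v) w0)
      ≤ U ^ t * cdF Q w0 := by
  have hpi' : ∀ i, 0 ≤ pi i := fun i => (hpi i).le
  have hU : 0 ≤ U := by
    have he : (Pi.single ⟨0, hn⟩ 1 : Fin n → ℝ) ≠ 0 := Pi.single_ne_zero_iff.mpr one_ne_zero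
    exact (cdR_nonneg hQ.posSemidef hpi' _).trans (hUr _ he)
  exact iterExpectation_le_pow_mul hpi' hU (sum_mul_cdF_cdT_le hQ hUr) t w0

/-- linear convergence of randomized CD: let `π` be interior and
`U_π < 1` a constant with `r(π, w) ≤ U_π` for all nonzero `w`. For i.i.d.
coordinate choices `i_1, …, i_t ∼ π` with iterates `w^(t) = T_{i_t} w^(t−1)`,
the expectation `E[f(w^(t))] = Σ_{s : Fin t → Fin n} (Π_k π(s k)) f(T_{s_t} ⋯ T_{s_1} w^(0))`
satisfies `E[f(w^(t))] ≤ U_π^t · f(w^(0))` for every `t`. -/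
theorem cd_linear_convergence {n : ℕ} (hn : 1 ≤ n)
    (Q : Matrix (Fin n) (Fin n) ℝ) (hQ : Q.PosDef)
    (pi : Fin n → ℝ) (hpi : ∀ i, 0 < pi i) (hsum : ∑ i, pi i = 1)
    (U : ℝ) (hU : U < 1) (hUr : ∀ w : Fin n → ℝ, w ≠ 0 → cdR Q pi w ≤ U)
    (w0 : Fin n → ℝ) (t : ℕ) :
    ∑ s : Fin t → Fin n, (∏ k, pi (s k)) *
        cdF Q ((List.ofFn s).foldl (fun v i => cdT Q i v) w0)
      ≤ U ^ t * cdF Q w0 :=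
  cd_linear_convergence_general hn Q hQ pi hpi U hUr w0 t
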